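/- Let X be a real vector space of dimension at least 2 endowed with two norms ‖·‖₁ and ‖·‖₂. The following are equivalent: (i) for every x ∈ X, {y : x ⊥_{ρ*} y with respect to ‖·‖₁} = {y : x ⊥_{ρ*} y with respect to ‖·‖₂}; (ii) for every x ∈ X, {y : x ⊥_B y with respect to ‖·‖₁} = {y : x ⊥_B y with respect to ‖·‖₂}. Moreover, each is equivalent to the existence of M > 0 with ‖x‖₂ = M·‖x‖₁ for all x ∈ X. -/

import Mathlib

/-!
For a norm `N`, `t ↦ N (x + t • y) ^ 2 / 2` is convex and `ρ₋(x, y) ≤ ρ₊(x, y)` are its one-sided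
derivatives at `0`, so `x ⊥_B y` iff `ρ₋(x, y) ≤ 0 ≤ ρ₊(x, y)`. As
`ρ±(x, y + s • x) = ρ±(x, y) + s * N x ^ 2`, the `s` with `x ⊥_B y + s • x` form the interval
`[-ρ₊(x, y) / N x ^ 2, -ρ₋(x, y) / N x ^ 2]`, whose endpoints are the zeros of
`s ↦ ρ*(x, y + s • x)`. Hence equal `ρ*`-orthogonality gives equal Birkhoff orthogonality, and
equal Birkhoff orthogonality gives `ρ₊(x, v) / N x ^ 2` equal for both norms. The latter says that
`N₂ / N₁` has right derivative `0` along every line avoiding `0`, so it is constant.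
-/

open Filter Topology

/-- `N : X → ℝ` is a norm on the real vector space `X`. -/
def IsNorm {X : Type*} [AddCommGroup X] [Module ℝ X] (N : X → ℝ) : Prop :=
  (∀ x : X, N x = 0 ↔ x = 0) ∧
  (∀ (t : ℝ) (x : X), N (t • x) = |t| * N x) ∧
  (∀ x y : X, N (x + y) ≤ N x + N y)

/-- The norm derivative `ρ₊` computed with respect to the norm `N`. -/
noncomputable def rhoPlusN {X : Type*} [AddCommGroup X] [Module ℝ X] (N : X → ℝ)
    (x y : X) : ℝ :=
  limUnder (𝓝[>] (0 : ℝ)) (fun t : ℝ => (N (x + t • y) ^ 2 - N x ^ 2) / (2 * t))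

/-- The norm derivative `ρ₋` computed with respect to the norm `N`. -/
noncomputable def rhoMinusN {X : Type*} [AddCommGroup X] [Module ℝ X] (N : X → ℝ)
    (x y : X) : ℝ :=
  limUnder (𝓝[<] (0 : ℝ)) (fun t : ℝ => (N (x + t • y) ^ 2 - N x ^ 2) / (2 * t))

/-- `ρ*` computed with respect to the norm `N`. -/
noncomputable def rhoStarN {X : Type*} [AddCommGroup X] [Module ℝ X] (N : X → ℝ)
    (x y : X) : ℝ :=
  rhoMinusN N x y * rhoPlusN N x y

open Set

lemma IsMinOn.nonneg_of_hasDerivWithinAt_Ioi {f : ℝ → ℝ} {a d : ℝ} (hf : IsMinOn f univ a)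
    (hd : HasDerivWithinAt f d (Ioi a) a) : 0 ≤ d := by
  refine ge_of_tendsto ((hasDerivWithinAt_iff_tendsto_slope' self_notMem_Ioi).1 hd) ?_
  filter_upwards [self_mem_nhdsWithin] with t (ht : a < t)
  exact smul_nonneg (inv_nonneg.2 (sub_nonneg.2 ht.le)) (sub_nonneg.2 (hf trivial))

lemma IsMinOn.nonpos_of_hasDerivWithinAt_Iio {f : ℝ → ℝ} {a d : ℝ} (hf : IsMinOn f univ a)
    (hd : HasDerivWithinAt f d (Iio a) a) : d ≤ 0 := by
  refine le_of_tendsto ((hasDerivWithinAt_iff_tendsto_slope' self_notMem_Iio).1 hd) ?_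
  filter_upwards [self_mem_nhdsWithin] with t (ht : t < a)
  exact smul_nonpos_of_nonpos_of_nonneg (inv_nonpos.2 (sub_nonpos.2 ht.le))
    (sub_nonneg.2 (hf trivial))

lemma nonpos_and_nonneg_iff_exists_roots {a b c : ℝ} (hab : a ≤ b) (hc : 0 < c) :
    (a ≤ 0 ∧ 0 ≤ b) ↔ (∃ t ≥ 0, (a + t * c) * (b + t * c) = 0) ∧
      ∃ t ≤ 0, (a + t * c) * (b + t * c) = 0 := by
  constructor
  · rintro ⟨ha, hb⟩
    refine ⟨⟨-a / c, div_nonneg (neg_nonneg.2 ha) hc.le, ?_⟩,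
      ⟨-b / c, div_nonpos_of_nonpos_of_nonneg (neg_nonpos.2 hb) hc.le, ?_⟩⟩ <;>
      field_simp <;> ring
  · rintro ⟨⟨t, ht, hroot⟩, ⟨t', ht', hroot'⟩⟩
    rcases mul_eq_zero.1 hroot with h | h <;> rcases mul_eq_zero.1 hroot' with h' | h' <;>
      constructor <;> nlinarith

section

variable {X : Type*} [AddCommGroup X] [Module ℝ X] {N N₁ N₂ : X → ℝ} {x y : X}

noncomputable def halfSqLine (N : X → ℝ) (x y : X) (t : ℝ) : ℝ := N (x + t • y) ^ 2 / 2

lemma slope_halfSqLine (N : X → ℝ) (x y : X) :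
    slope (halfSqLine N x y) 0 = fun t => (N (x + t • y) ^ 2 - N x ^ 2) / (2 * t) := by
  funext t
  simp only [slope_def_field, halfSqLine, zero_smul, add_zero, sub_zero]
  ring

lemma rhoPlusN_eq_of_hasDerivWithinAt {d : ℝ}
    (hd : HasDerivWithinAt (halfSqLine N x y) d (Ioi 0) 0) : rhoPlusN N x y = d := by
  rw [hasDerivWithinAt_iff_tendsto_slope' self_notMem_Ioi, slope_halfSqLine] at hd
  exact hd.limUnder_eq

lemma rhoMinusN_eq_of_hasDerivWithinAt {d : ℝ}
    (hd : HasDerivWithinAt (halfSqLine N x y) d (Iio 0) 0) : rhoMinusN N x y = d := by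
  rw [hasDerivWithinAt_iff_tendsto_slope' self_notMem_Iio, slope_halfSqLine] at hd
  exact hd.limUnder_eq

lemma halfSqLine_const_mul (M : ℝ) (x y : X) :
    halfSqLine (fun z => M * N z) x y = fun t => M ^ 2 * halfSqLine N x y t := by
  funext t
  simp only [halfSqLine]
  ring

namespace IsNorm

lemma map_zero (h : IsNorm N) : N 0 = 0 := (h.1 0).2 rfl

lemma nonneg (h : IsNorm N) (x : X) : 0 ≤ N x := by
  have hneg : N (-x) = N x := by simpa using h.2.1 (-1) x
  have htri := h.2.2 x (-x)
  rw [add_neg_cancel, h.map_zero, hneg] at htri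
  linarith

lemma pos (h : IsNorm N) (hx : x ≠ 0) : 0 < N x :=
  (h.nonneg x).lt_of_ne' (mt (h.1 x).1 hx)

lemma convexOn_line (h : IsNorm N) (x y : X) : ConvexOn ℝ univ fun t : ℝ => N (x + t • y) := by
  refine ⟨convex_univ, fun a _ b _ p q hp hq hpq => ?_⟩
  have hcomb : p • (x + a • y) + q • (x + b • y) = (p + q) • x + (p • a + q • b) • y := by
    module
  rw [hpq, one_smul] at hcomb
  calc N (x + (p • a + q • b) • y) ≤ N (p • (x + a • y)) + N (q • (x + b • y)) :=
        hcomb ▸ h.2.2 _ _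
    _ = p • N (x + a • y) + q • N (x + b • y) := by
        rw [h.2.1, h.2.1, abs_of_nonneg hp, abs_of_nonneg hq, smul_eq_mul, smul_eq_mul]

lemma halfSqLine_add_smul (h : IsNorm N) (x y : X) {s t : ℝ} (hst : 0 < 1 + t * s) :
    halfSqLine N x (y + s • x) t = (1 + t * s) ^ 2 * halfSqLine N x y (t / (1 + t * s)) := by
  have hline : x + t • (y + s • x) = (1 + t * s) • (x + (t / (1 + t * s)) • y) := by
    rw [smul_add (1 + t * s), smul_smul (1 + t * s), mul_div_cancel₀ _ hst.ne']
    module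
  simp only [halfSqLine, hline, h.2.1, abs_of_pos hst]
  ring

lemma convexOn_halfSqLine (h : IsNorm N) (x y : X) : ConvexOn ℝ univ (halfSqLine N x y) := by
  have hsq := (h.convexOn_line x y).pow (fun t _ => h.nonneg _) 2
  exact hsq.smul (c := (1 / 2 : ℝ)) (by norm_num) |>.congr fun t _ => by
    simp only [halfSqLine, Pi.pow_apply, smul_eq_mul]; ring

lemma continuous_halfSqLine (h : IsNorm N) (x y : X) : Continuous (halfSqLine N x y) :=
  continuousOn_univ.1 ((h.convexOn_halfSqLine x y).continuousOn isOpen_univ)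

lemma hasDerivWithinAt_rhoPlusN (h : IsNorm N) (x y : X) :
    HasDerivWithinAt (halfSqLine N x y) (rhoPlusN N x y) (Ioi 0) 0 := by
  have hd := (h.convexOn_halfSqLine x y).hasDerivWithinAt_rightDeriv_of_mem_interior (x := 0)
    (by simp)
  rwa [rhoPlusN_eq_of_hasDerivWithinAt hd]

lemma hasDerivWithinAt_rhoMinusN (h : IsNorm N) (x y : X) :
    HasDerivWithinAt (halfSqLine N x y) (rhoMinusN N x y) (Iio 0) 0 := by
  have hd := (h.convexOn_halfSqLine x y).hasDerivWithinAt_leftDeriv_of_mem_interior (x := 0)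
    (by simp)
  rwa [rhoMinusN_eq_of_hasDerivWithinAt hd]

lemma rhoMinusN_le_rhoPlusN (h : IsNorm N) (x y : X) : rhoMinusN N x y ≤ rhoPlusN N x y := by
  rw [← (h.hasDerivWithinAt_rhoPlusN x y).derivWithin (uniqueDiffWithinAt_Ioi 0),
    ← (h.hasDerivWithinAt_rhoMinusN x y).derivWithin (uniqueDiffWithinAt_Iio 0)]
  exact (h.convexOn_halfSqLine x y).leftDeriv_le_rightDeriv_of_mem_interior (by simp)

lemma hasDerivWithinAt_halfSqLine (h : IsNorm N) (x y : X) (s : ℝ) :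
    HasDerivWithinAt (halfSqLine N x y) (rhoPlusN N (x + s • y) y) (Ioi s) s := by
  have hshift : HasDerivWithinAt (fun t : ℝ => t - s) 1 (Ioi s) s :=
    ((hasDerivAt_id s).sub_const s).hasDerivWithinAt
  have hd := (h.hasDerivWithinAt_rhoPlusN (x + s • y) y).comp_of_eq s hshift
    (fun t ht => mem_Ioi.2 (sub_pos.2 ht)) (sub_self s).symm
  rw [mul_one] at hd
  refine hd.congr (fun t _ => ?_) ?_ <;>
    simp only [Function.comp_apply, halfSqLine, add_assoc, ← add_smul, add_sub_cancel]

lemma birkhoff_iff_isMinOn (h : IsNorm N) (x y : X) :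
    (∀ lam : ℝ, N x ≤ N (x + lam • y)) ↔ IsMinOn (halfSqLine N x y) univ 0 := by
  simp only [isMinOn_univ_iff, halfSqLine, zero_smul, add_zero]
  refine forall_congr' fun lam => ?_
  rw [div_le_div_iff_of_pos_right two_pos, sq_le_sq₀ (h.nonneg _) (h.nonneg _)]

lemma birkhoff_iff (h : IsNorm N) (x y : X) :
    (∀ lam : ℝ, N x ≤ N (x + lam • y)) ↔ rhoMinusN N x y ≤ 0 ∧ 0 ≤ rhoPlusN N x y := by
  have hplus := h.hasDerivWithinAt_rhoPlusN x y
  have hminus := h.hasDerivWithinAt_rhoMinusN x y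
  rw [h.birkhoff_iff_isMinOn]
  refine ⟨fun hmin => ⟨hmin.nonpos_of_hasDerivWithinAt_Iio hminus,
    hmin.nonneg_of_hasDerivWithinAt_Ioi hplus⟩, fun ⟨hm, hp⟩ => ?_⟩
  refine (h.convexOn_halfSqLine x y).isMinOn_of_leftDeriv_nonpos_of_rightDeriv_nonneg (by simp)
    ?_ ?_
  · rwa [hminus.derivWithin (uniqueDiffWithinAt_Iio 0)]
  · rwa [hplus.derivWithin (uniqueDiffWithinAt_Ioi 0)]

/-- `t / (1 + t * s)` has the sign of `t` near `0`, so this covers both one-sided derivatives. -/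
lemma hasDerivWithinAt_halfSqLine_add_smul (h : IsNorm N) {S : Set ℝ}
    (hS : ∀ c > 0, ∀ t ∈ S, c * t ∈ S) {d : ℝ} (hd : HasDerivWithinAt (halfSqLine N x y) d S 0)
    (s : ℝ) : HasDerivWithinAt (halfSqLine N x (y + s • x)) (d + s * N x ^ 2) S 0 := by
  set U := {t : ℝ | 0 < 1 + t * s}
  have hU : U ∈ 𝓝 (0 : ℝ) := (isOpen_lt continuous_const (by fun_prop)).mem_nhds (by simp)
  rw [← hasDerivWithinAt_inter hU]
  have hden : HasDerivAt (fun t : ℝ => 1 + t * s) s 0 := by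
    simpa using ((hasDerivAt_id (0 : ℝ)).mul_const s).const_add 1
  have hτ : HasDerivAt (fun t : ℝ => t / (1 + t * s)) 1 0 := by
    simpa using (hasDerivAt_id' (0 : ℝ)).fun_div hden (by simp)
  have hcomp := hd.comp_of_eq (0 : ℝ) (hτ.hasDerivWithinAt (s := S ∩ U))
    (fun t ht => by simpa [div_eq_inv_mul] using hS _ (inv_pos.2 ht.2) t ht.1) (by simp)
  refine ((hden.pow 2).hasDerivWithinAt.mul hcomp).congr
    (fun t ht => h.halfSqLine_add_smul x y ht.2) (by simp [halfSqLine]) |>.congr_deriv ?_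
  simp only [Nat.cast_ofNat, zero_mul, add_zero, Nat.add_one_sub_one, one_pow, mul_one,
    Function.comp_apply, halfSqLine, div_one, zero_smul, Pi.pow_apply, one_mul]
  ring

lemma rhoPlusN_add_smul (h : IsNorm N) (x y : X) (s : ℝ) :
    rhoPlusN N x (y + s • x) = rhoPlusN N x y + s * N x ^ 2 :=
  rhoPlusN_eq_of_hasDerivWithinAt <| h.hasDerivWithinAt_halfSqLine_add_smul
    (fun _ hc _ ht => mul_pos hc ht) (h.hasDerivWithinAt_rhoPlusN x y) s

lemma rhoMinusN_add_smul (h : IsNorm N) (x y : X) (s : ℝ) :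
    rhoMinusN N x (y + s • x) = rhoMinusN N x y + s * N x ^ 2 :=
  rhoMinusN_eq_of_hasDerivWithinAt <| h.hasDerivWithinAt_halfSqLine_add_smul
    (fun _ hc _ ht => mul_neg_of_pos_of_neg hc ht) (h.hasDerivWithinAt_rhoMinusN x y) s

lemma rhoStarN_const_mul (h : IsNorm N) (M : ℝ) (x y : X) :
    rhoStarN (fun z => M * N z) x y = M ^ 4 * rhoStarN N x y := by
  have hplus : rhoPlusN (fun z => M * N z) x y = M ^ 2 * rhoPlusN N x y :=
    rhoPlusN_eq_of_hasDerivWithinAt <| by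
      rw [halfSqLine_const_mul]; exact (h.hasDerivWithinAt_rhoPlusN x y).const_mul _
  have hminus : rhoMinusN (fun z => M * N z) x y = M ^ 2 * rhoMinusN N x y :=
    rhoMinusN_eq_of_hasDerivWithinAt <| by
      rw [halfSqLine_const_mul]; exact (h.hasDerivWithinAt_rhoMinusN x y).const_mul _
  rw [rhoStarN, rhoStarN, hplus, hminus]
  ring

/-- Along the line `y + t • x`, `ρ*` is a quadratic in `t` with the roots `-ρ₋ / N x ^ 2` and
`-ρ₊ / N x ^ 2`, and `x ⊥_B y` says they lie on either side of `0`. -/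
lemma birkhoff_iff_rhoStarN (h : IsNorm N) (hx : x ≠ 0) (y : X) :
    (∀ lam : ℝ, N x ≤ N (x + lam • y)) ↔
      (∃ t ≥ (0 : ℝ), rhoStarN N x (y + t • x) = 0) ∧
        ∃ t ≤ (0 : ℝ), rhoStarN N x (y + t • x) = 0 := by
  simp only [rhoStarN, h.rhoPlusN_add_smul, h.rhoMinusN_add_smul]
  rw [h.birkhoff_iff]
  exact nonpos_and_nonneg_iff_exists_roots (h.rhoMinusN_le_rhoPlusN x y) (pow_pos (h.pos hx) 2)

lemma setOf_birkhoff_add_smul (h : IsNorm N) (hx : x ≠ 0) (v : X) :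
    {s : ℝ | ∀ lam : ℝ, N x ≤ N (x + lam • (v + s • x))} =
      Icc (-rhoPlusN N x v / N x ^ 2) (-rhoMinusN N x v / N x ^ 2) := by
  have hc := pow_pos (h.pos hx) 2
  ext s
  simp only [mem_ofPred_eq, h.birkhoff_iff, h.rhoPlusN_add_smul, h.rhoMinusN_add_smul, mem_Icc,
    div_le_iff₀ hc, le_div_iff₀ hc]
  constructor <;> rintro ⟨h1, h2⟩ <;> constructor <;> linarith

lemma rhoPlusN_div_eq_of_birkhoff (h₁ : IsNorm N₁) (h₂ : IsNorm N₂) (hx : x ≠ 0)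
    (hbj : {y : X | ∀ lam : ℝ, N₁ x ≤ N₁ (x + lam • y)} =
      {y : X | ∀ lam : ℝ, N₂ x ≤ N₂ (x + lam • y)}) (v : X) :
    rhoPlusN N₁ x v / N₁ x ^ 2 = rhoPlusN N₂ x v / N₂ x ^ 2 := by
  have hIcc : Icc (-rhoPlusN N₁ x v / N₁ x ^ 2) (-rhoMinusN N₁ x v / N₁ x ^ 2) =
      Icc (-rhoPlusN N₂ x v / N₂ x ^ 2) (-rhoMinusN N₂ x v / N₂ x ^ 2) := by
    rw [← h₁.setOf_birkhoff_add_smul hx, ← h₂.setOf_birkhoff_add_smul hx]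
    ext s
    exact Set.ext_iff.1 hbj (v + s • x)
  have hle : -rhoPlusN N₁ x v / N₁ x ^ 2 ≤ -rhoMinusN N₁ x v / N₁ x ^ 2 :=
    div_le_div_of_nonneg_right (neg_le_neg (h₁.rhoMinusN_le_rhoPlusN x v)) (sq_nonneg _)
  simpa [neg_div] using ((Icc_eq_Icc_iff hle).1 hIcc).1

end IsNorm

section RatioOfNorms

variable (h₁ : IsNorm N₁) (h₂ : IsNorm N₂)
  (hρ : ∀ x : X, x ≠ 0 → ∀ v : X, rhoPlusN N₁ x v / N₁ x ^ 2 = rhoPlusN N₂ x v / N₂ x ^ 2)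
include h₁ h₂ hρ

/-- `(N₂ / N₁) ^ 2 = halfSqLine N₂ / halfSqLine N₁` has right derivative `0` along the line. -/
lemma norm_ratio_eq_along_line {u v : X} (hline : ∀ t : ℝ, u + t • v ≠ 0) (t : ℝ) :
    N₂ (u + t • v) / N₁ (u + t • v) = N₂ u / N₁ u := by
  set F : ℝ → ℝ := fun t => halfSqLine N₂ u v t / halfSqLine N₁ u v t
  have hpos₁ : ∀ s, 0 < halfSqLine N₁ u v s := fun s => by
    simpa [halfSqLine] using pow_pos (h₁.pos (hline s)) 2
  have hderiv : ∀ s, HasDerivWithinAt F 0 (Ici s) s := fun s => by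
    refine (((h₂.hasDerivWithinAt_halfSqLine u v s).div (h₁.hasDerivWithinAt_halfSqLine u v s)
      (hpos₁ s).ne').Ici_of_Ioi).congr_deriv ?_
    have hs := hρ _ (hline s) v
    rw [div_eq_div_iff (pow_pos (h₁.pos (hline s)) 2).ne' (pow_pos (h₂.pos (hline s)) 2).ne']
      at hs
    simp only [halfSqLine]
    rw [div_eq_zero_iff]
    left
    linarith
  have hcont : Continuous F :=
    (h₂.continuous_halfSqLine u v).div (h₁.continuous_halfSqLine u v) fun s => (hpos₁ s).ne'
  have hconst : F t = F 0 := by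
    rcases le_total 0 t with ht | ht
    · exact constant_of_has_deriv_right_zero hcont.continuousOn (fun s _ => hderiv s) t ⟨ht, le_rfl⟩
    · exact (constant_of_has_deriv_right_zero hcont.continuousOn (fun s _ => hderiv s) 0
        ⟨ht, le_rfl⟩).symm
  have hF : ∀ s, F s = (N₂ (u + s • v) / N₁ (u + s • v)) ^ 2 := fun s => by
    simp only [F, halfSqLine]
    field_simp
  rw [hF, hF, zero_smul, add_zero] at hconst
  exact (pow_left_inj₀ (div_nonneg (h₂.nonneg _) (h₁.nonneg _))
    (div_nonneg (h₂.nonneg _) (h₁.nonneg _)) two_ne_zero).1 hconst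

lemma norm_ratio_eq_of_ne_zero (hx : x ≠ 0) (hy : y ≠ 0) : N₂ y / N₁ y = N₂ x / N₁ x := by
  by_cases hdep : ∃ c : ℝ, y = c • x
  · obtain ⟨c, rfl⟩ := hdep
    have hc : c ≠ 0 := by rintro rfl; simp at hy
    rw [h₁.2.1, h₂.2.1, mul_div_mul_left _ _ (abs_pos.2 hc).ne']
  · have hline : ∀ t : ℝ, x + t • (y - x) ≠ 0 := by
      intro t ht
      have ht0 : t ≠ 0 := by rintro rfl; simp [hx] at ht
      have hty : t • y = (t - 1) • x := by
        rw [← sub_eq_zero, ← ht]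
        module
      exact hdep ⟨(t - 1) / t, by rw [div_eq_inv_mul, mul_smul, ← hty, smul_smul,
        inv_mul_cancel₀ ht0, one_smul]⟩
    simpa using norm_ratio_eq_along_line h₁ h₂ hρ hline 1

lemma exists_pos_eq_mul_of_rhoPlusN_div_eq : ∃ M : ℝ, 0 < M ∧ ∀ x : X, N₂ x = M * N₁ x := by
  rcases subsingleton_or_nontrivial X with hX | hX
  · exact ⟨1, one_pos, fun x => by rw [Subsingleton.elim x 0, h₁.map_zero, h₂.map_zero, mul_zero]⟩
  obtain ⟨x₀, hx₀⟩ := exists_ne (0 : X)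
  refine ⟨N₂ x₀ / N₁ x₀, div_pos (h₂.pos hx₀) (h₁.pos hx₀), fun x => ?_⟩
  rcases eq_or_ne x 0 with rfl | hx
  · rw [h₁.map_zero, h₂.map_zero, mul_zero]
  · rw [← norm_ratio_eq_of_ne_zero h₁ h₂ hρ hx₀ hx, div_mul_cancel₀ _ (h₁.pos hx).ne']

end RatioOfNorms

end

theorem orthogonality_sets_tfae_general {X : Type*} [AddCommGroup X] [Module ℝ X]
    (N₁ N₂ : X → ℝ) (h₁ : IsNorm N₁) (h₂ : IsNorm N₂) :
    List.TFAE
      [ ∀ x : X, {y : X | rhoStarN N₁ x y = 0} = {y : X | rhoStarN N₂ x y = 0},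
        ∀ x : X, {y : X | ∀ lam : ℝ, N₁ x ≤ N₁ (x + lam • y)} =
                 {y : X | ∀ lam : ℝ, N₂ x ≤ N₂ (x + lam • y)},
        ∃ M : ℝ, 0 < M ∧ ∀ x : X, N₂ x = M * N₁ x ] := by
  tfae_have 1 → 2
  | hstar, x => by
    ext y
    rcases eq_or_ne x 0 with rfl | hx
    · simp [h₁.map_zero, h₂.map_zero, h₁.nonneg, h₂.nonneg]
    · have hx' (z : X) : rhoStarN N₁ x z = 0 ↔ rhoStarN N₂ x z = 0 := Set.ext_iff.1 (hstar x) z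
      simp only [mem_ofPred_eq, h₁.birkhoff_iff_rhoStarN hx, h₂.birkhoff_iff_rhoStarN hx, hx']
  tfae_have 2 → 3
  | hbj => exists_pos_eq_mul_of_rhoPlusN_div_eq h₁ h₂ fun x hx =>
    h₁.rhoPlusN_div_eq_of_birkhoff h₂ hx (hbj x)
  tfae_have 3 → 1
  | ⟨M, hM, hMN⟩, x => by
    obtain rfl : N₂ = fun z => M * N₁ z := funext hMN
    ext y
    simp [h₁.rhoStarN_const_mul, hM.ne']
  tfae_finish

theorem orthogonality_sets_tfae {X : Type*} [AddCommGroup X] [Module ℝ X]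
    (hdim : 2 ≤ Module.rank ℝ X) (N₁ N₂ : X → ℝ) (h₁ : IsNorm N₁) (h₂ : IsNorm N₂) :
    List.TFAE
      [ ∀ x : X, {y : X | rhoStarN N₁ x y = 0} = {y : X | rhoStarN N₂ x y = 0},
        ∀ x : X, {y : X | ∀ lam : ℝ, N₁ x ≤ N₁ (x + lam • y)} =
                 {y : X | ∀ lam : ℝ, N₂ x ≤ N₂ (x + lam • y)},
        ∃ M : ℝ, 0 < M ∧ ∀ x : X, N₂ x = M * N₁ x ] :=
  orthogonality_sets_tfae_general N₁ N₂ h₁ h₂
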